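/- Each continuation-cost function A_l is nonincreasing in the belief: for all 0 ≤ b < b' ≤ 1, A_l(b) ≥ A_l(b'). -/

import Mathlib

/-!
Apart from the decreasing term `(1 - k b) C`, `A_l(b)` depends on `b` only through the mixed
probability `p = q b + s (1 - b)`, which increases with `b`, namely as
`p k V(1) + (1 - p k) V(Φ p)` with `V = J_{l+1}` and `Φ(p) = p (1 - k) / (1 - p k)`.
If `V` is nonincreasing on `[0, 1]`, raising `p` to `p'` lowers `V(Φ p)` (as `Φ` is increasing)
and moves the weight `(p' - p) k` from `V(Φ p)` onto `V(1) ≤ V(Φ p)`; both lower the cost.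
Since `min C ·` preserves antitonicity, backward induction gives the claim.
-/

open Set

noncomputable section

def mixture (q s b : ℝ) : ℝ := q * b + s * (1 - b)

def updateBelief (k p : ℝ) : ℝ := p * (1 - k) / (1 - p * k)

/-- One step of the backward recursion, `A_l = bellman C q s k J_{l+1}`. -/
def bellman (C q s k : ℝ) (V : ℝ → ℝ) (b : ℝ) : ℝ :=
  (1 - k * b) * C + mixture q s b * k * V 1 +
    (1 - mixture q s b * k) * V (updateBelief k (mixture q s b))

end

section

variable {C q s k : ℝ}

lemma mixture_monotone (hsq : s ≤ q) : Monotone (mixture q s) := fun b b' hbb' => by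
  unfold mixture
  nlinarith

lemma mapsTo_mixture_Icc (hs0 : 0 ≤ s) (hsq : s ≤ q) (hq1 : q ≤ 1) :
    MapsTo (mixture q s) (Icc 0 1) (Icc 0 1) := by
  rintro b ⟨hb0, hb1⟩
  unfold mixture
  constructor <;> nlinarith

lemma one_sub_mul_pos {p : ℝ} (hp : p ∈ Icc (0 : ℝ) 1) (hk1 : k < 1) : 0 < 1 - p * k := by
  obtain ⟨hp0, hp1⟩ := hp
  rcases le_or_gt 0 k with hk0 | hk0
  · nlinarith
  · nlinarith

lemma mapsTo_updateBelief_Icc (hk1 : k < 1) :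
    MapsTo (updateBelief k) (Icc 0 1) (Icc 0 1) := by
  intro p hp
  have hden := one_sub_mul_pos hp hk1
  obtain ⟨hp0, hp1⟩ := hp
  refine ⟨div_nonneg (mul_nonneg hp0 (by linarith)) hden.le, ?_⟩
  rw [updateBelief, div_le_one hden]
  linarith

lemma updateBelief_monotoneOn (hk1 : k < 1) : MonotoneOn (updateBelief k) (Icc 0 1) := by
  intro p hp p' hp' hpp'
  rw [updateBelief, updateBelief, div_le_div_iff₀ (one_sub_mul_pos hp hk1) (one_sub_mul_pos hp' hk1)]
  nlinarith [mul_nonneg (sub_nonneg.mpr hpp') (by linarith : (0 : ℝ) ≤ 1 - k)]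

lemma antitone_one_sub_mul_mul (hk0 : 0 ≤ k) (hC : 0 ≤ C) :
    Antitone fun b : ℝ => (1 - k * b) * C := fun b b' hbb' => by
  nlinarith [mul_nonneg (mul_nonneg hk0 hC) (sub_nonneg.mpr hbb')]

lemma antitoneOn_expectedCost (hk0 : 0 ≤ k) (hk1 : k < 1) {V : ℝ → ℝ}
    (hV : AntitoneOn V (Icc 0 1)) :
    AntitoneOn (fun p => p * k * V 1 + (1 - p * k) * V (updateBelief k p)) (Icc 0 1) := by
  intro p hp p' hp' hpp'
  have hΦ : updateBelief k p ∈ Icc (0 : ℝ) 1 := mapsTo_updateBelief_Icc hk1 hp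
  have hdrop : V (updateBelief k p') ≤ V (updateBelief k p) :=
    hV hΦ (mapsTo_updateBelief_Icc hk1 hp') (updateBelief_monotoneOn hk1 hp hp' hpp')
  have hterminal : V 1 ≤ V (updateBelief k p) := hV hΦ ⟨zero_le_one, le_rfl⟩ hΦ.2
  nlinarith [mul_le_mul_of_nonneg_left hdrop (one_sub_mul_pos hp' hk1).le,
    mul_nonneg (mul_nonneg (sub_nonneg.mpr hpp') hk0) (sub_nonneg.mpr hterminal)]

lemma bellman_antitoneOn (hC : 0 ≤ C) (hs0 : 0 ≤ s) (hsq : s ≤ q) (hq1 : q ≤ 1)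
    (hk0 : 0 ≤ k) (hk1 : k < 1) {V : ℝ → ℝ} (hV : AntitoneOn V (Icc 0 1)) :
    AntitoneOn (bellman C q s k V) (Icc 0 1) := by
  have hcost := (antitoneOn_expectedCost hk0 hk1 hV).comp_MonotoneOn
    ((mixture_monotone hsq).monotoneOn _) (mapsTo_mixture_Icc hs0 hsq hq1)
  have h := ((antitone_one_sub_mul_mul hk0 hC).antitoneOn _).add hcost
  intro b hb b' hb' hbb'
  simpa only [bellman, Function.comp_apply, add_assoc] using h hb hb' hbb'

end

theorem continuation_cost_antitone_in_belief_general
    (C q s k : ℝ) (hC : 0 < C) (hs0 : 0 ≤ s) (hsq : s < q) (hq1 : q ≤ 1)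
    (hk0 : 0 < k) (hk1 : k < 1)
    (J : ℕ → ℝ → ℝ) (A : ℕ → ℝ → ℝ)
    (hJ0 : ∀ b : ℝ, J 0 b = (1 - k*b)*C)
    (hA : ∀ m : ℕ, ∀ b : ℝ, A m b =
      (1 - k*b)*C + (q*b + s*(1-b))*k * J m 1 +
        (1 - (q*b + s*(1-b))*k) *
          J m (((q*b + s*(1-b))*(1-k)) / (1 - (q*b + s*(1-b))*k)))
    (hJrec : ∀ m : ℕ, ∀ b : ℝ, J (m+1) b = min C (A m b)) :
    ∀ m : ℕ, ∀ b ∈ Set.Icc (0:ℝ) 1, ∀ b' ∈ Set.Icc (0:ℝ) 1,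
      b < b' → A m b' ≤ A m b := by
  have hA_bellman : ∀ m, A m = bellman C q s k (J m) := fun m => funext (hA m)
  have hA_anti : ∀ m, AntitoneOn (J m) (Icc 0 1) → AntitoneOn (A m) (Icc 0 1) := fun m hJ =>
    hA_bellman m ▸ bellman_antitoneOn hC.le hs0 hsq.le hq1 hk0.le hk1 hJ
  have hJ_anti : ∀ m, AntitoneOn (J m) (Icc 0 1) := by
    intro m
    induction m with
    | zero =>
      rw [funext hJ0]
      exact (antitone_one_sub_mul_mul hk0.le hC.le).antitoneOn _
    | succ m ih =>
      rw [funext (hJrec m)]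
      exact antitoneOn_const.min (hA_anti m ih)
  intro m b hb b' hb' hbb'
  exact hA_anti m (hJ_anti m) hb hb' hbb'.le

/-- Each continuation-cost function `A_l` is nonincreasing in the belief:
for all `0 ≤ b < b' ≤ 1`, `A_l(b) ≥ A_l(b')` (time-to-go indexing). -/
theorem continuation_cost_antitone_in_belief
    (C q s k : ℝ) (hC : 0 < C) (hs0 : 0 ≤ s) (hsq : s < q) (hq1 : q ≤ 1)
    (hk0 : 0 < k) (hk1 : k < 1)
    (hden : ∀ b ∈ Set.Icc (0:ℝ) 1, 0 < 1 - (q*b + s*(1-b))*k)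
    (J : ℕ → ℝ → ℝ) (A : ℕ → ℝ → ℝ)
    (hJ0 : ∀ b : ℝ, J 0 b = (1 - k*b)*C)
    (hA : ∀ m : ℕ, ∀ b : ℝ, A m b =
      (1 - k*b)*C + (q*b + s*(1-b))*k * J m 1 +
        (1 - (q*b + s*(1-b))*k) *
          J m (((q*b + s*(1-b))*(1-k)) / (1 - (q*b + s*(1-b))*k)))
    (hJrec : ∀ m : ℕ, ∀ b : ℝ, J (m+1) b = min C (A m b)) :
    ∀ m : ℕ, ∀ b ∈ Set.Icc (0:ℝ) 1, ∀ b' ∈ Set.Icc (0:ℝ) 1,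
      b < b' → A m b' ≤ A m b :=
  continuation_cost_antitone_in_belief_general C q s k hC hs0 hsq hq1 hk0 hk1 J A hJ0 hA hJrec
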